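/- arXiv:1705.00474 — 5 statements merged into one kernel-verified Lean document; each statement's English description precedes it below -/
import Mathlib

section
/- Lemma 1 (fronthaul quantization noise as artificial noise): If the triple (R, Ω, Φ) is feasible, then the triple (R, Ω + Φ, 0) is also feasible, and for any weights w_k ≥ 0 the weighted secrecy objective is unchanged: Σ_{k∈K} w_k · max(f_k(R, Ω + Φ), 0) equals Σ_{k∈K} w_k · max(f_k(R, (Ω + Φ) + 0), 0). Hence setting the artificial-noise covariance Φ to zero incurs no loss of optimality. -/
open Matrix BigOperators Finset ComplexOrder

noncomputable def logDet {p : Type*} [Fintype p] [DecidableEq p] (M : Matrix p p ℂ) : ℝ :=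
  Real.log M.det.re

def blk {I : Type*} {n : I → ℕ} (M : Matrix (Σ i, Fin (n i)) (Σ i, Fin (n i)) ℂ) (i : I) :
    Matrix (Fin (n i)) (Fin (n i)) ℂ :=
  M.submatrix (fun a => ⟨i, a⟩) (fun a => ⟨i, a⟩)

def psub {I : Type*} [DecidableEq I] {n : I → ℕ}
    (M : Matrix (Σ i, Fin (n i)) (Σ i, Fin (n i)) ℂ) (S : Finset I) :
    Matrix {j : Σ i, Fin (n i) // j.1 ∈ S} {j : Σ i, Fin (n i) // j.1 ∈ S} ℂ :=
  M.submatrix Subtype.val Subtype.val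

def IsBlockDiag {I : Type*} {n : I → ℕ}
    (M : Matrix (Σ i, Fin (n i)) (Σ i, Fin (n i)) ℂ) : Prop :=
  ∀ a b : Σ i, Fin (n i), a.1 ≠ b.1 → M a b = 0

noncomputable def gS {I : Type*} [Fintype I] [DecidableEq I] {n : I → ℕ} (S : Finset I)
    (R Ω : Matrix (Σ i, Fin (n i)) (Σ i, Fin (n i)) ℂ) : ℝ :=
  (∑ i ∈ S, logDet (blk (R + Ω) i)) - logDet (psub Ω S)

noncomputable def phi {p : Type*} [Fintype p] [DecidableEq p] (A B : Matrix p p ℂ) : ℝ :=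
  logDet (A + B) - logDet B

noncomputable def fk {I : Type*} [Fintype I] [DecidableEq I] {n : I → ℕ}
    {K : Type*} [Fintype K] [DecidableEq K] {m e : K → ℕ}
    (H : ∀ k : K, Matrix (Fin (m k)) (Σ i, Fin (n i)) ℂ)
    (G : ∀ k : K, Matrix (Fin (e k)) (Σ i, Fin (n i)) ℂ)
    (Sig : ∀ k : K, Matrix (Fin (m k)) (Fin (m k)) ℂ)
    (Z : ∀ k : K, Matrix (Fin (e k)) (Fin (e k)) ℂ)
    (k : K) (R : K → Matrix (Σ i, Fin (n i)) (Σ i, Fin (n i)) ℂ)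
    (Θ : Matrix (Σ i, Fin (n i)) (Σ i, Fin (n i)) ℂ) : ℝ :=
  phi (H k * R k * (H k)ᴴ)
      ((∑ l ∈ Finset.univ.erase k, H k * R l * (H k)ᴴ) + H k * Θ * (H k)ᴴ + Sig k)
  - phi (G k * R k * (G k)ᴴ)
      ((∑ l ∈ Finset.univ.erase k, G k * R l * (G k)ᴴ) + G k * Θ * (G k)ᴴ + Z k)

def Feasible {I : Type*} [Fintype I] [DecidableEq I] {n : I → ℕ}
    {K : Type*} [Fintype K] (C P : I → ℝ)
    (R : K → Matrix (Σ i, Fin (n i)) (Σ i, Fin (n i)) ℂ)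
    (Ω Φ : Matrix (Σ i, Fin (n i)) (Σ i, Fin (n i)) ℂ) : Prop :=
  (∀ k, (R k).PosSemidef) ∧ Ω.PosDef ∧ Φ.PosSemidef ∧ IsBlockDiag Φ ∧
  (∀ S : Finset I, S.Nonempty → gS S (∑ k, R k) Ω ≤ ∑ i ∈ S, C i) ∧
  (∀ i : I, ((blk (∑ k, R k) i).trace).re + ((blk Ω i).trace).re + ((blk Φ i).trace).re ≤ P i)


/-!
The objective only sees the total noise `Ω + Φ`, so everything rests on the fronthaul constraints
`g_S(R, Ω + Φ) ≤ g_S(R, Ω)`. With the gain `Γ(A, P) = log det (A + P) - log det A`,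
`g_S(R, Ω + Φ) - g_S(R, Ω) = ∑_{i ∈ S} Γ((R + Ω)_ii, Φ_ii) - Γ(Ω_S, Φ_S)`.
The gain is antitone in `A`, because `(A + P)⁻¹ ≤ A⁻¹` in the Loewner order; this bounds each
summand by `Γ(Ω_ii, Φ_ii)`. For block-diagonal `Φ` the gain is superadditive over the blocks,
because adding `Φ` only enlarges the Schur complements of `Ω_S`; hence
`∑_{i ∈ S} Γ(Ω_ii, Φ_ii) ≤ Γ(Ω_S, Φ_S)`.
-/

open scoped MatrixOrder

namespace Matrix

variable {p q : Type*} [Fintype p] [DecidableEq p] [Fintype q] [DecidableEq q]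

lemma PosDef.re_det_pos {A : Matrix p p ℂ} (hA : A.PosDef) : 0 < A.det.re :=
  (Complex.pos_iff.mp hA.det_pos).1

lemma PosDef.im_det {A : Matrix p p ℂ} (hA : A.PosDef) : A.det.im = 0 :=
  (Complex.pos_iff.mp hA.det_pos).2.symm

lemma PosSemidef.sqrt_mul_mul_sqrt {A : Matrix p p ℂ} (hA : A.PosSemidef) (P : Matrix p p ℂ) :
    (CFC.sqrt P * A * CFC.sqrt P).PosSemidef := by
  simpa only [(CFC.sqrt_nonneg P).posSemidef.1.eq] using
    hA.conjTranspose_mul_mul_same (CFC.sqrt P)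

lemma PosSemidef.one_le_re_det_one_add {Q : Matrix p p ℂ} (hQ : Q.PosSemidef) :
    1 ≤ (1 + Q).det.re := by
  have hQsa : IsSelfAdjoint Q := hQ.1
  have h : cfc (fun x : ℝ => 1 + x) Q = 1 + Q := by
    rw [cfc_const_add (1 : ℝ) (fun x => x) Q, cfc_id' ℝ Q, map_one]
  rw [← h, hQ.1.cfc_eq]
  simp only [IsHermitian.cfc, Complex.coe_algebraMap, det_map, det_diagonal, Function.comp_apply]
  norm_cast
  exact Finset.one_le_prod fun i _ => le_add_of_nonneg_right (hQ.eigenvalues_nonneg i)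

open scoped Matrix.Norms.L2Operator in
lemma PosDef.inv_sub_inv_add_posSemidef {A P : Matrix p p ℂ} (hA : A.PosDef)
    (hP : P.PosSemidef) : (A⁻¹ - (A + P)⁻¹).PosSemidef := by
  have h := CStarAlgebra.antitoneOn_ringInverse (A := Matrix p p ℂ)
    (isStrictlyPositive_iff_posDef.mpr hA)
    (isStrictlyPositive_iff_posDef.mpr (hA.add_posSemidef hP))
    (show A ≤ A + P from Matrix.le_iff.mpr (by simpa using hP))
  simpa [Matrix.le_iff, nonsing_inv_eq_ringInverse] using h

lemma logDet_of_det_eq_mul {r : Type*} [Fintype r] [DecidableEq r] {M : Matrix r r ℂ}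
    {A : Matrix p p ℂ} {B : Matrix q q ℂ} (hA : A.PosDef) (hB : B.PosDef)
    (h : M.det = A.det * B.det) : logDet M = logDet A + logDet B := by
  rw [logDet, h, Complex.mul_re, hA.im_det, zero_mul, sub_zero,
    Real.log_mul hA.re_det_pos.ne' hB.re_det_pos.ne', logDet, logDet]

lemma logDet_submatrix_equiv (e : q ≃ p) (M : Matrix p p ℂ) :
    logDet (M.submatrix e e) = logDet M := by
  rw [logDet, det_submatrix_equiv_self, logDet]

lemma logDet_of_isEmpty [IsEmpty p] (M : Matrix p p ℂ) : logDet M = 0 := by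
  simp [logDet, det_isEmpty]

noncomputable def logDetGain (A P : Matrix p p ℂ) : ℝ :=
  logDet (A + P) - logDet A

lemma logDetGain_submatrix_equiv (e : q ≃ p) (A P : Matrix p p ℂ) :
    logDetGain (A.submatrix e e) (P.submatrix e e) = logDetGain A P := by
  rw [logDetGain, logDetGain, ← logDet_submatrix_equiv e (A + P), ← logDet_submatrix_equiv e A]
  rfl

lemma logDetGain_eq_logDet_one_add {A P : Matrix p p ℂ} (hA : A.PosDef) (hP : P.PosSemidef) :
    logDetGain A P = logDet (1 + CFC.sqrt P * A⁻¹ * CFC.sqrt P) := by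
  have hQ := hA.inv.posSemidef.sqrt_mul_mul_sqrt P
  have hdet : (A + CFC.sqrt P * CFC.sqrt P).det
      = A.det * (1 + CFC.sqrt P * A⁻¹ * CFC.sqrt P).det :=
    det_add_mul _ _ hA.det_pos.ne'.isUnit
  rw [CFC.sqrt_mul_sqrt_self P hP.nonneg] at hdet
  rw [logDetGain, logDet_of_det_eq_mul hA (PosDef.one.add_posSemidef hQ) hdet, add_sub_cancel_left]

lemma logDetGain_nonneg {A P : Matrix p p ℂ} (hA : A.PosDef) (hP : P.PosSemidef) :
    0 ≤ logDetGain A P := by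
  rw [logDetGain_eq_logDet_one_add hA hP]
  exact Real.log_nonneg (hA.inv.posSemidef.sqrt_mul_mul_sqrt P).one_le_re_det_one_add

lemma logDet_le_logDet_add {A P : Matrix p p ℂ} (hA : A.PosDef) (hP : P.PosSemidef) :
    logDet A ≤ logDet (A + P) :=
  sub_nonneg.mp (logDetGain_nonneg hA hP)

lemma logDetGain_add_le {A P Φ : Matrix p p ℂ} (hA : A.PosDef) (hP : P.PosSemidef)
    (hΦ : Φ.PosSemidef) : logDetGain (A + P) Φ ≤ logDetGain A Φ := by
  have hAP := hA.add_posSemidef hP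
  have h := logDet_le_logDet_add
    (PosDef.one.add_posSemidef (hAP.inv.posSemidef.sqrt_mul_mul_sqrt Φ))
    ((hA.inv_sub_inv_add_posSemidef hP).sqrt_mul_mul_sqrt Φ)
  rwa [Matrix.mul_sub, Matrix.sub_mul, add_add_sub_cancel, ← logDetGain_eq_logDet_one_add hAP hΦ,
    ← logDetGain_eq_logDet_one_add hA hΦ] at h

lemma PosDef.schur_complement₂₂ {A : Matrix q q ℂ} {B : Matrix q p ℂ} {D : Matrix p p ℂ}
    (hM : (fromBlocks A B Bᴴ D).PosDef) : (A - B * D⁻¹ * Bᴴ).PosDef := by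
  have hD : D.PosDef := hM.submatrix Sum.inr_injective
  let := D.invertibleOfIsUnitDet hD.det_pos.ne'.isUnit
  have hdet := det_fromBlocks₂₂ A B Bᴴ D
  rw [invOf_eq_nonsing_inv] at hdet
  refine ((PosDef.fromBlocks₂₂ A B hD).mp hM.posSemidef).posDef_iff_det_ne_zero.mpr
    fun h => hM.det_pos.ne' ?_
  rw [hdet, h, mul_zero]

lemma logDet_fromBlocks {A : Matrix q q ℂ} {B : Matrix q p ℂ} {C : Matrix p q ℂ}
    {D : Matrix p p ℂ} (hD : D.PosDef) (hS : (A - B * D⁻¹ * C).PosDef) :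
    logDet (fromBlocks A B C D) = logDet D + logDet (A - B * D⁻¹ * C) := by
  let := D.invertibleOfIsUnitDet hD.det_pos.ne'.isUnit
  refine logDet_of_det_eq_mul hD hS ?_
  rw [det_fromBlocks₂₂, invOf_eq_nonsing_inv]

-- Adding `Q` to `D` decreases `B D⁻¹ Bᴴ`, so the Schur complement gains at least `P`.
theorem logDetGain_add_logDetGain_le_fromBlocks {A P : Matrix q q ℂ} {B : Matrix q p ℂ}
    {D Q : Matrix p p ℂ} (hM : (fromBlocks A B Bᴴ D).PosDef) (hP : P.PosSemidef)
    (hQ : Q.PosSemidef) :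
    logDetGain A P + logDetGain D Q ≤ logDetGain (fromBlocks A B Bᴴ D) (fromBlocks P 0 0 Q) := by
  have hD : D.PosDef := hM.submatrix Sum.inr_injective
  have hDQ := hD.add_posSemidef hQ
  have hS := hM.schur_complement₂₂
  have hN : (B * D⁻¹ * Bᴴ).PosSemidef := hD.inv.posSemidef.mul_mul_conjTranspose_same B
  have hdiff : (B * D⁻¹ * Bᴴ - B * (D + Q)⁻¹ * Bᴴ).PosSemidef := by
    simpa only [Matrix.mul_sub, Matrix.sub_mul] using
      (hD.inv_sub_inv_add_posSemidef hQ).mul_mul_conjTranspose_same B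
  have hSP := hS.add_posSemidef hP
  have hS_add : A + P - B * (D + Q)⁻¹ * Bᴴ
      = (A - B * D⁻¹ * Bᴴ + P) + (B * D⁻¹ * Bᴴ - B * (D + Q)⁻¹ * Bᴴ) := by abel
  have hschur := logDet_le_logDet_add hSP hdiff
  have hgain := logDetGain_add_le hS hN hP
  rw [← hS_add] at hschur
  rw [sub_add_cancel] at hgain
  unfold logDetGain at hgain ⊢
  rw [fromBlocks_add, add_zero, add_zero, logDet_fromBlocks hD hS,
    logDet_fromBlocks hDQ (hS_add ▸ hSP.add_posSemidef hdiff)]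
  linarith

end Matrix

section Blocks

variable {I : Type*} {n : I → ℕ}

lemma blk_add (M N : Matrix (Σ i, Fin (n i)) (Σ i, Fin (n i)) ℂ) (i : I) :
    blk (M + N) i = blk M i + blk N i := rfl

lemma Matrix.PosDef.blk {M : Matrix (Σ i, Fin (n i)) (Σ i, Fin (n i)) ℂ} (hM : M.PosDef) (i : I) :
    (blk M i).PosDef :=
  hM.submatrix fun _ _ h => eq_of_heq (Sigma.mk.inj_iff.mp h).2

variable [DecidableEq I]

def insertEquiv (a : I) (S : Finset I) (ha : a ∉ S) :
    Fin (n a) ⊕ {j : Σ i, Fin (n i) // j.1 ∈ S} ≃ {j : Σ i, Fin (n i) // j.1 ∈ insert a S} where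
  toFun := Sum.elim (fun x => ⟨⟨a, x⟩, Finset.mem_insert_self a S⟩)
    (fun j => ⟨j.1, Finset.mem_insert_of_mem j.2⟩)
  invFun j := if h : j.1.1 = a then Sum.inl (Fin.cast (by rw [h]) j.1.2)
    else Sum.inr ⟨j.1, (Finset.mem_insert.mp j.2).resolve_left h⟩
  left_inv := by
    rintro (x | j)
    · simp
    · have h : j.1.1 ≠ a := fun h => ha (h ▸ j.2)
      simp [h]
  right_inv := by
    rintro ⟨⟨i, x⟩, hmem⟩
    by_cases h : i = a
    · subst h
      simp
    · simp [h]

lemma psub_add (M N : Matrix (Σ i, Fin (n i)) (Σ i, Fin (n i)) ℂ) (S : Finset I) :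
    psub (M + N) S = psub M S + psub N S := rfl

lemma psub_insert_submatrix (M : Matrix (Σ i, Fin (n i)) (Σ i, Fin (n i)) ℂ) (a : I)
    (S : Finset I) (ha : a ∉ S) :
    (psub M (insert a S)).submatrix (insertEquiv a S ha) (insertEquiv a S ha)
      = fromBlocks (blk M a) (of fun x (j : {j : Σ i, Fin (n i) // j.1 ∈ S}) => M ⟨a, x⟩ j.1)
          (of fun (j : {j : Σ i, Fin (n i) // j.1 ∈ S}) x => M j.1 ⟨a, x⟩) (psub M S) := by
  ext (x | j) (y | k) <;> rfl

variable [Fintype I]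

lemma sum_logDetGain_blk_le_psub {Ω Φ : Matrix (Σ i, Fin (n i)) (Σ i, Fin (n i)) ℂ}
    (hΩ : Ω.PosDef) (hΦ : Φ.PosSemidef) (hΦd : IsBlockDiag Φ) (S : Finset I) :
    ∑ i ∈ S, logDetGain (blk Ω i) (blk Φ i) ≤ logDetGain (psub Ω S) (psub Φ S) := by
  induction S using Finset.induction_on with
  | empty =>
    have : IsEmpty {j : Σ i, Fin (n i) // j.1 ∈ (∅ : Finset I)} :=
      ⟨fun j => Finset.notMem_empty _ j.2⟩
    simp [logDetGain, logDet_of_isEmpty]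
  | @insert a S ha ih =>
    set e := insertEquiv a S ha
    have hout : ∀ j : {j : Σ i, Fin (n i) // j.1 ∈ S}, j.1.1 ≠ a := fun j h => ha (h ▸ j.2)
    have hΩe : (psub Ω (insert a S)).submatrix e e
        = fromBlocks (blk Ω a) (of fun x j => Ω ⟨a, x⟩ j.1)
            (of fun x j => Ω ⟨a, x⟩ j.1)ᴴ (psub Ω S) := by
      rw [psub_insert_submatrix]
      congr 1
      ext j x
      exact (hΩ.1.apply _ _).symm
    have hΦe : (psub Φ (insert a S)).submatrix e e = fromBlocks (blk Φ a) 0 0 (psub Φ S) := by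
      rw [psub_insert_submatrix]
      congr 1 <;> ext
      · exact hΦd _ _ (hout _).symm
      · exact hΦd _ _ (hout _)
    have hblocks := logDetGain_add_logDetGain_le_fromBlocks (P := blk Φ a) (Q := psub Φ S)
      (hΩe ▸ (hΩ.submatrix Subtype.val_injective).submatrix e.injective)
      (hΦ.submatrix _) (hΦ.submatrix _)
    rw [← hΩe, ← hΦe, logDetGain_submatrix_equiv] at hblocks
    rw [Finset.sum_insert ha]
    linarith

lemma gS_add_le {R Ω Φ : Matrix (Σ i, Fin (n i)) (Σ i, Fin (n i)) ℂ} (hR : R.PosSemidef)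
    (hΩ : Ω.PosDef) (hΦ : Φ.PosSemidef) (hΦd : IsBlockDiag Φ) (S : Finset I) :
    gS S R (Ω + Φ) ≤ gS S R Ω := by
  have hgain : ∀ i ∈ S, logDetGain (blk (R + Ω) i) (blk Φ i) ≤ logDetGain (blk Ω i) (blk Φ i) :=
    fun i _ => by
      rw [add_comm R Ω]
      exact logDetGain_add_le (hΩ.blk i) (hR.submatrix _) (hΦ.submatrix _)
  have hsum := (Finset.sum_le_sum hgain).trans (sum_logDetGain_blk_le_psub hΩ hΦ hΦd S)
  have hsplit : gS S R (Ω + Φ) = gS S R Ω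
      + ∑ i ∈ S, logDetGain (blk (R + Ω) i) (blk Φ i) - logDetGain (psub Ω S) (psub Φ S) := by
    simp only [gS, logDetGain, ← add_assoc, blk_add, psub_add, Finset.sum_sub_distrib]
    ring
  linarith

end Blocks

theorem lemma1_quantization_as_artificial_noise_general
    {I : Type*} [Fintype I] [DecidableEq I] {n : I → ℕ}
    {K : Type*} [Fintype K] [DecidableEq K] {m e : K → ℕ}
    (H : ∀ k : K, Matrix (Fin (m k)) (Σ i, Fin (n i)) ℂ)
    (G : ∀ k : K, Matrix (Fin (e k)) (Σ i, Fin (n i)) ℂ)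
    (Sig : ∀ k : K, Matrix (Fin (m k)) (Fin (m k)) ℂ)
    (Z : ∀ k : K, Matrix (Fin (e k)) (Fin (e k)) ℂ)
    (C P : I → ℝ)
    (R : K → Matrix (Σ i, Fin (n i)) (Σ i, Fin (n i)) ℂ)
    (Ω Φ : Matrix (Σ i, Fin (n i)) (Σ i, Fin (n i)) ℂ)
    (hfeas : Feasible C P R Ω Φ) :
    Feasible C P R (Ω + Φ) 0 ∧
    ∀ w : K → ℝ, (∀ k, 0 ≤ w k) →
      ∑ k, w k * max (fk H G Sig Z k R (Ω + Φ)) 0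
        = ∑ k, w k * max (fk H G Sig Z k R ((Ω + Φ) + 0)) 0 := by
  obtain ⟨hR, hΩ, hΦ, hΦd, hcap, hpow⟩ := hfeas
  have hRsum : (∑ k, R k).PosSemidef := posSemidef_sum _ fun k _ => hR k
  refine ⟨⟨hR, hΩ.add_posSemidef hΦ, .zero, fun _ _ _ => rfl,
    fun S hS => (gS_add_le hRsum hΩ hΦ hΦd S).trans (hcap S hS), fun i => ?_⟩,
    fun w _ => by rw [add_zero]⟩
  simpa [blk, submatrix_add, trace_add, add_assoc] using hpow i

theorem lemma1_quantization_as_artificial_noise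
    {I : Type*} [Fintype I] [DecidableEq I] {n : I → ℕ}
    {K : Type*} [Fintype K] [DecidableEq K] {m e : K → ℕ}
    (H : ∀ k : K, Matrix (Fin (m k)) (Σ i, Fin (n i)) ℂ)
    (G : ∀ k : K, Matrix (Fin (e k)) (Σ i, Fin (n i)) ℂ)
    (Sig : ∀ k : K, Matrix (Fin (m k)) (Fin (m k)) ℂ)
    (Z : ∀ k : K, Matrix (Fin (e k)) (Fin (e k)) ℂ)
    (hSig : ∀ k, (Sig k).PosDef) (hZ : ∀ k, (Z k).PosDef)
    (C P : I → ℝ) (hC : ∀ i, 0 ≤ C i) (hP : ∀ i, 0 ≤ P i)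
    (R : K → Matrix (Σ i, Fin (n i)) (Σ i, Fin (n i)) ℂ)
    (Ω Φ : Matrix (Σ i, Fin (n i)) (Σ i, Fin (n i)) ℂ)
    (hfeas : Feasible C P R Ω Φ) :
    Feasible C P R (Ω + Φ) 0 ∧
    ∀ w : K → ℝ, (∀ k, 0 ≤ w k) →
      ∑ k, w k * max (fk H G Sig Z k R (Ω + Φ)) 0
        = ∑ k, w k * max (fk H G Sig Z k R ((Ω + Φ) + 0)) 0 :=
  lemma1_quantization_as_artificial_noise_general H G Sig Z C P R Ω Φ hfeas
end

section
/- Monotone decrease of the Gaussian rate function in the noise covariance: let K, B, Φ be n×n complex matrices with K Hermitian positive semidefinite, B Hermitian positive definite, and Φ Hermitian positive semidefinite. Then log det(K + B + Φ) − log det(B + Φ) ≤ log det(K + B) − log det(B). -/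
open Matrix BigOperators Finset ComplexOrder

/-!
Writing `L = √K`, the Weinstein–Aronszajn identity gives
`log det (K + M) - log det M = log det (1 + L M⁻¹ L)` for every positive definite `M`.
Adding `Φ` to the noise `M = B` increases `M` in the Loewner order, hence decreases `M⁻¹`
and `1 + L M⁻¹ L`, and the determinant is monotone on positive definite matrices.
-/

open scoped MatrixOrder

namespace Matrix

variable {n : Type*} [Fintype n] [DecidableEq n]

lemma det_mul_self_add {R : Type*} [CommRing R] (L : Matrix n n R) {M : Matrix n n R}
    (hM : IsUnit M.det) : (L * L + M).det = M.det * (1 + L * M⁻¹ * L).det := by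
  have hfactor : L * L + M = M * (1 + M⁻¹ * L * L) := by
    rw [Matrix.mul_add, mul_one, ← Matrix.mul_assoc, ← Matrix.mul_assoc, mul_nonsing_inv _ hM,
      one_mul, add_comm]
  rw [hfactor, det_mul, det_one_add_mul_comm, ← Matrix.mul_assoc]

lemma one_le_det_of_one_le {𝕜 : Type*} [RCLike 𝕜] {A : Matrix n n 𝕜} (h : 1 ≤ A) :
    1 ≤ A.det := by
  have hA : A.IsHermitian := by
    simpa using (le_iff.mp h).isHermitian.add isHermitian_one
  rw [hA.det_eq_prod_eigenvalues]
  refine Finset.one_le_prod fun i _ => ?_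
  have hspec := (algebraMap_le_iff_le_spectrum (R := ℝ) (r := 1) hA.isSelfAdjoint).mp
    (by simpa using h) _ (hA.eigenvalues_mem_spectrum_real i)
  exact_mod_cast hspec

open scoped Matrix.Norms.L2Operator in
lemma PosDef.det_le_det_of_le {A B : Matrix n n ℂ} (hA : A.PosDef) (h : A ≤ B) :
    A.det ≤ B.det := by
  have : IsStrictlyPositive A := hA.isStrictlyPositive
  set T := A ^ (-(1 / 2) : ℝ)
  have hTA : T * A * T = 1 := CFC.conjugate_rpow_neg_one_half A
  have hTB : 1 ≤ T * B * T := hTA ▸ IsSelfAdjoint.conjugate_le_conjugate h (by cfc_tac)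
  calc A.det = 1 * A.det := (one_mul _).symm
    _ ≤ (T * B * T).det * A.det := by
      gcongr
      · exact hA.det_pos.le
      · exact one_le_det_of_one_le hTB
    _ = B.det * (T * A * T).det := by simp only [det_mul]; ring
    _ = B.det := by rw [hTA, det_one, mul_one]

open scoped Matrix.Norms.L2Operator in
lemma PosDef.inv_le_inv_of_le {A B : Matrix n n ℂ} (hA : A.PosDef) (h : A ≤ B) :
    B⁻¹ ≤ A⁻¹ := by
  have hB : B.PosDef := by simpa using hA.add_posSemidef (le_iff.mp h)
  simpa only [coe_units_inv, IsUnit.unit_spec] using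
    CStarAlgebra.inv_le_inv (a := hA.isUnit.unit) (b := hB.isUnit.unit) hA.posSemidef.nonneg h

lemma PosDef.one_add_sqrt_mul_inv_mul_sqrt {M : Matrix n n ℂ} (hM : M.PosDef)
    (K : Matrix n n ℂ) :
    (1 + CFC.sqrt K * M⁻¹ * CFC.sqrt K).PosDef :=
  PosDef.one.add_posSemidef
    (conjugate_nonneg_of_nonneg hM.inv.posSemidef.nonneg (CFC.sqrt_nonneg K)).posSemidef

end Matrix

lemma Complex.log_re_mul {z w : ℂ} (hz : 0 < z) (hw : 0 < w) :
    Real.log (z * w).re = Real.log z.re + Real.log w.re := by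
  obtain ⟨hz_re, hz_im⟩ := Complex.pos_iff.mp hz
  obtain ⟨hw_re, -⟩ := Complex.pos_iff.mp hw
  rw [Complex.mul_re, ← hz_im, zero_mul, sub_zero, Real.log_mul hz_re.ne' hw_re.ne']

section logDet

variable {n : Type*} [Fintype n] [DecidableEq n]

lemma logDet_le_logDet {A B : Matrix n n ℂ} (hA : A.PosDef) (h : A ≤ B) :
    logDet A ≤ logDet B :=
  Real.log_le_log (Complex.pos_iff.mp hA.det_pos).1 (Complex.le_def.mp (hA.det_le_det_of_le h)).1

lemma logDet_add_sub_logDet {K M : Matrix n n ℂ} (hK : K.PosSemidef) (hM : M.PosDef) :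
    logDet (K + M) - logDet M = logDet (1 + CFC.sqrt K * M⁻¹ * CFC.sqrt K) := by
  have hdet := det_mul_self_add (CFC.sqrt K) ((isUnit_iff_isUnit_det M).mp hM.isUnit)
  rw [CFC.sqrt_mul_sqrt_self K hK.nonneg] at hdet
  rw [logDet, logDet, logDet, hdet,
    Complex.log_re_mul hM.det_pos (hM.one_add_sqrt_mul_inv_mul_sqrt K).det_pos, add_sub_cancel_left]

end logDet

theorem logDet_rate_anti_in_noise {nn : ℕ}
    (K B Φ : Matrix (Fin nn) (Fin nn) ℂ)
    (hK : K.PosSemidef) (hB : B.PosDef) (hΦ : Φ.PosSemidef) :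
    logDet (K + B + Φ) - logDet (B + Φ) ≤ logDet (K + B) - logDet B := by
  have hBΦ : (B + Φ).PosDef := hB.add_posSemidef hΦ
  have hinv : (B + Φ)⁻¹ ≤ B⁻¹ := hB.inv_le_inv_of_le (le_add_of_nonneg_right hΦ.nonneg)
  rw [add_assoc, logDet_add_sub_logDet hK hBΦ, logDet_add_sub_logDet hK hB]
  exact logDet_le_logDet (hBΦ.one_add_sqrt_mul_inv_mul_sqrt K)
    (add_le_add_right (conjugate_le_conjugate_of_nonneg hinv (CFC.sqrt_nonneg K)) 1)
end

section
/- Block-diagonal domination for the inverse of a positive definite block matrix: for every Hermitian positive definite matrix M indexed by J and every i ∈ I, the i-th diagonal block of the inverse dominates the inverse of the i-th diagonal block, i.e., (M⁻¹)_{ii} − (M_{ii})⁻¹ is Hermitian positive semidefinite. -/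
open Matrix BigOperators Finset ComplexOrder

/-!
For an isometry `P` (`Pᴴ * P = 1`) and `B = Pᴴ * M * P`, put `Q = M⁻¹ * P - P * B⁻¹`.
Expanding, `Qᴴ * M * Q = Pᴴ * M⁻¹ * P - B⁻¹`, which is positive semidefinite because `M` is.
A diagonal block is the compression `Pᴴ * M * P` by the isometry `P` that includes the block's
coordinates.
-/

namespace Matrix

variable {m n K : Type*} [Fintype n]

theorem submatrix_eq_conjTranspose_mul_mul [DecidableEq n] [Semiring K] [StarRing K]
    (M : Matrix n n K) (f : m → n) :
    M.submatrix f f =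
      ((1 : Matrix n n K).submatrix id f)ᴴ * M * (1 : Matrix n n K).submatrix id f := by
  ext a b
  simp [mul_apply, one_apply]

variable [Fintype m] [DecidableEq m]

lemma injective_mulVec_of_conjTranspose_mul_self_eq_one [Semiring K] [StarRing K]
    {P : Matrix n m K} (hP : Pᴴ * P = 1) :
    Function.Injective P.mulVec := fun x y hxy => by
  simpa [mulVec_mulVec, hP] using congrArg (Pᴴ *ᵥ ·) hxy

theorem PosDef.posSemidef_conjTranspose_mul_inv_mul_sub_inv [DecidableEq n]
    [Field K] [PartialOrder K] [StarRing K] {M : Matrix n n K} (hM : M.PosDef)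
    {P : Matrix n m K} (hP : Pᴴ * P = 1) :
    (Pᴴ * M⁻¹ * P - (Pᴴ * M * P)⁻¹).PosSemidef := by
  set B := Pᴴ * M * P
  have hB : B.PosDef :=
    hM.conjTranspose_mul_mul_same (injective_mulVec_of_conjTranspose_mul_self_eq_one hP)
  have hMdet : IsUnit M.det := (isUnit_iff_isUnit_det M).1 hM.isUnit
  have hBB : Pᴴ * (M * (P * B⁻¹)) = 1 := by
    rw [← Matrix.mul_assoc, ← Matrix.mul_assoc,
      mul_nonsing_inv B ((isUnit_iff_isUnit_det B).1 hB.isUnit)]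
  have hPP (X : Matrix m m K) : Pᴴ * (P * X) = X := by
    rw [← Matrix.mul_assoc, hP, Matrix.one_mul]
  have hQ : (M⁻¹ * P - P * B⁻¹)ᴴ * M * (M⁻¹ * P - P * B⁻¹) = Pᴴ * M⁻¹ * P - B⁻¹ := by
    simp only [conjTranspose_sub, conjTranspose_mul, hM.inv.isHermitian.eq,
      hB.inv.isHermitian.eq, Matrix.sub_mul, Matrix.mul_sub, Matrix.mul_assoc,
      nonsing_inv_mul_cancel_left (h := hMdet), mul_nonsing_inv_cancel_left (h := hMdet),
      hPP, hP, hBB, Matrix.mul_one, sub_self, sub_zero]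
  exact hQ ▸ hM.posSemidef.conjTranspose_mul_mul_same _

end Matrix

theorem inv_diag_block_dominates_block_inv
    {I : Type*} [Fintype I] [DecidableEq I] {n : I → ℕ}
    (M : Matrix (Σ i, Fin (n i)) (Σ i, Fin (n i)) ℂ) (hM : M.PosDef) (i : I) :
    (blk M⁻¹ i - (blk M i)⁻¹).PosSemidef := by
  set P := (1 : Matrix (Σ i, Fin (n i)) (Σ i, Fin (n i)) ℂ).submatrix id (Sigma.mk i)
  have hblk (N : Matrix (Σ i, Fin (n i)) (Σ i, Fin (n i)) ℂ) : blk N i = Pᴴ * N * P :=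
    submatrix_eq_conjTranspose_mul_mul N (Sigma.mk i)
  have hP : Pᴴ * P = 1 := by
    rw [← Matrix.mul_one Pᴴ, ← hblk, blk, submatrix_one _ sigma_mk_injective]
  rw [hblk, hblk]
  exact hM.posSemidef_conjTranspose_mul_inv_mul_sub_inv hP
end

section
/- Trace comparison for block-diagonal perturbations: for every Hermitian positive definite matrix M indexed by J and every block-diagonal Hermitian positive semidefinite Φ indexed by J, Σ_{i∈I} Re tr((M_{ii})⁻¹ Φ_{ii}) ≤ Re tr(M⁻¹ Φ). -/
open Matrix BigOperators Finset ComplexOrder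

/-!
Since `Φ` is block-diagonal, `tr (M⁻¹ Φ) = ∑ᵢ tr ((M⁻¹)ᵢᵢ Φᵢᵢ)`, so it suffices to compare the
summands. The diagonal block `(M⁻¹)ᵢᵢ` dominates `(Mᵢᵢ)⁻¹` in the Loewner order: writing the block
as a compression `B = Pᴴ M P` by an isometry `P`, one has `Pᴴ M⁻¹ P - B⁻¹ = Xᴴ M X` with
`X = M⁻¹ P - P B⁻¹`. Finally `X ↦ tr (X Q)` is monotone for positive semidefinite `Q`, because
`tr (A Cᴴ C) = tr (C A Cᴴ)`.
-/

namespace Matrix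

open scoped MatrixOrder

variable {𝕜 : Type*} [RCLike 𝕜] {m n : Type*} [Fintype n]

lemma PosSemidef.trace_mul_nonneg {A B : Matrix n n 𝕜} (hA : A.PosSemidef) (hB : B.PosSemidef) :
    0 ≤ (A * B).trace := by
  classical
  obtain ⟨C, rfl⟩ := CStarAlgebra.nonneg_iff_eq_star_mul_self.mp hB.nonneg
  rw [← Matrix.mul_assoc, trace_mul_cycle, star_eq_conjTranspose]
  exact (hA.mul_mul_conjTranspose_same C).trace_nonneg

lemma trace_mul_le_trace_mul_of_le {A B Q : Matrix n n 𝕜} (hAB : A ≤ B) (hQ : Q.PosSemidef) :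
    (A * Q).trace ≤ (B * Q).trace := by
  simpa [Matrix.sub_mul, trace_sub] using (le_iff.mp hAB).trace_mul_nonneg hQ

variable [DecidableEq n] [Fintype m] [DecidableEq m]

lemma PosDef.inv_conjTranspose_mul_mul_le {M : Matrix n n 𝕜} (hM : M.PosDef) {P : Matrix n m 𝕜}
    (hP : Pᴴ * P = 1) : (Pᴴ * M * P)⁻¹ ≤ Pᴴ * M⁻¹ * P := by
  set B := Pᴴ * M * P with hB_def
  have hB : B.PosDef := hM.conjTranspose_mul_mul_same fun x y hxy => by
    simpa [mulVec_mulVec, hP] using congrArg (Pᴴ *ᵥ ·) hxy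
  have hM_det := (isUnit_iff_isUnit_det M).mp hM.isUnit
  have hB_det := (isUnit_iff_isUnit_det B).mp hB.isUnit
  have hX : (M⁻¹ * P - P * B⁻¹)ᴴ * M * (M⁻¹ * P - P * B⁻¹) = Pᴴ * M⁻¹ * P - B⁻¹ := by
    simp only [conjTranspose_sub, conjTranspose_mul, hM.inv.1.eq, hB.inv.1.eq, Matrix.sub_mul,
      Matrix.mul_sub, Matrix.mul_assoc, nonsing_inv_mul_cancel_left _ _ hM_det,
      mul_nonsing_inv_cancel_left _ _ hM_det]
    simp only [← Matrix.mul_assoc, hP, Matrix.one_mul, Matrix.mul_one, ← hB_def,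
      nonsing_inv_mul _ hB_det]
    abel
  rw [le_iff, ← hX]
  exact hM.posSemidef.conjTranspose_mul_mul_same _

lemma PosDef.inv_submatrix_le_submatrix_inv {M : Matrix n n 𝕜} (hM : M.PosDef) {e : m → n}
    (he : Function.Injective e) : (M.submatrix e e)⁻¹ ≤ M⁻¹.submatrix e e := by
  have hcompress (N : Matrix n n 𝕜) : N.submatrix e e =
      ((1 : Matrix n n 𝕜).submatrix id e)ᴴ * N * (1 : Matrix n n 𝕜).submatrix id e := by
    ext a b
    simp [mul_apply, one_apply]
  rw [hcompress M, hcompress M⁻¹]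
  refine hM.inv_conjTranspose_mul_mul_le ?_
  rw [← Matrix.mul_one (_ᴴ), ← hcompress, submatrix_one _ he]

end Matrix

lemma trace_mul_eq_sum_blk_of_isBlockDiag {I : Type*} [Fintype I] {n : I → ℕ}
    (N : Matrix (Σ i, Fin (n i)) (Σ i, Fin (n i)) ℂ) {Φ : Matrix (Σ i, Fin (n i)) (Σ i, Fin (n i)) ℂ}
    (hΦ : IsBlockDiag Φ) : (N * Φ).trace = ∑ i, (blk N i * blk Φ i).trace := by
  simp only [trace, diag_apply, mul_apply, blk, submatrix_apply, Fintype.sum_sigma]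
  refine sum_congr rfl fun i _ => sum_congr rfl fun k _ => ?_
  exact Fintype.sum_eq_single i fun j hj => sum_eq_zero fun l _ => by rw [hΦ _ _ hj, mul_zero]

theorem trace_inv_blockdiag_le
    {I : Type*} [Fintype I] [DecidableEq I] {n : I → ℕ}
    (M Φ : Matrix (Σ i, Fin (n i)) (Σ i, Fin (n i)) ℂ)
    (hM : M.PosDef) (hΦ : Φ.PosSemidef) (hΦbd : IsBlockDiag Φ) :
    ∑ i : I, (((blk M i)⁻¹ * blk Φ i).trace).re ≤ ((M⁻¹ * Φ).trace).re := by
  rw [trace_mul_eq_sum_blk_of_isBlockDiag _ hΦbd, Complex.re_sum]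
  gcongr with i
  have hblock := hM.inv_submatrix_le_submatrix_inv (sigma_mk_injective (i := i))
  exact trace_mul_le_trace_mul_of_le hblock (hΦ.submatrix _)
end

section
/- The convexified secrecy rate function minorizes the true secrecy rate function: fix a user k and a reference point (R⁰, Ω⁰) with each R⁰_l Hermitian positive semidefinite and Ω⁰ Hermitian positive semidefinite (all indexed by J). For (R, Ω) with each R_l Hermitian positive semidefinite and Ω Hermitian positive semidefinite, define T_k(R,Ω) := Σ_{l∈K} H_k R_l H_k^* + H_k Ω H_k^* + Σ_k, I_k(R,Ω) := Σ_{l≠k} H_k R_l H_k^* + H_k Ω H_k^* + Σ_k, and T̄_k(R,Ω), Ī_k(R,Ω) analogously with G_k and Z_k in place of H_k and Σ_k; these are all Hermitian positive definite. Define the surrogate f̃_k(R, Ω; R⁰, Ω⁰) := log det T_k(R,Ω) − ψ(I_k(R,Ω), I_k(R⁰,Ω⁰)) − ψ(T̄_k(R,Ω), T̄_k(R⁰,Ω⁰)) + log det Ī_k(R,Ω). Then f̃_k(R, Ω; R⁰, Ω⁰) ≤ f_k(R, Ω) for all such (R, Ω), with equality when (R, Ω) = (R⁰, Ω⁰). 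-/
open Matrix BigOperators Finset ComplexOrder

noncomputable def psi {p : Type*} [Fintype p] [DecidableEq p] (X Y : Matrix p p ℂ) : ℝ :=
  logDet Y + ((Y⁻¹ * (X - Y)).trace).re

noncomputable def Tk {I : Type*} [Fintype I] [DecidableEq I] {n : I → ℕ}
    {K : Type*} [Fintype K] {m : K → ℕ}
    (H : ∀ k : K, Matrix (Fin (m k)) (Σ i, Fin (n i)) ℂ)
    (Sig : ∀ k : K, Matrix (Fin (m k)) (Fin (m k)) ℂ)
    (k : K) (R : K → Matrix (Σ i, Fin (n i)) (Σ i, Fin (n i)) ℂ)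
    (Ω : Matrix (Σ i, Fin (n i)) (Σ i, Fin (n i)) ℂ) :
    Matrix (Fin (m k)) (Fin (m k)) ℂ :=
  (∑ l : K, H k * R l * (H k)ᴴ) + H k * Ω * (H k)ᴴ + Sig k

noncomputable def Ik {I : Type*} [Fintype I] [DecidableEq I] {n : I → ℕ}
    {K : Type*} [Fintype K] [DecidableEq K] {m : K → ℕ}
    (H : ∀ k : K, Matrix (Fin (m k)) (Σ i, Fin (n i)) ℂ)
    (Sig : ∀ k : K, Matrix (Fin (m k)) (Fin (m k)) ℂ)
    (k : K) (R : K → Matrix (Σ i, Fin (n i)) (Σ i, Fin (n i)) ℂ)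
    (Ω : Matrix (Σ i, Fin (n i)) (Σ i, Fin (n i)) ℂ) :
    Matrix (Fin (m k)) (Fin (m k)) ℂ :=
  (∑ l ∈ Finset.univ.erase k, H k * R l * (H k)ᴴ) + H k * Ω * (H k)ᴴ + Sig k

noncomputable def ftilde {I : Type*} [Fintype I] [DecidableEq I] {n : I → ℕ}
    {K : Type*} [Fintype K] [DecidableEq K] {m e : K → ℕ}
    (H : ∀ k : K, Matrix (Fin (m k)) (Σ i, Fin (n i)) ℂ)
    (G : ∀ k : K, Matrix (Fin (e k)) (Σ i, Fin (n i)) ℂ)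
    (Sig : ∀ k : K, Matrix (Fin (m k)) (Fin (m k)) ℂ)
    (Z : ∀ k : K, Matrix (Fin (e k)) (Fin (e k)) ℂ)
    (k : K) (R : K → Matrix (Σ i, Fin (n i)) (Σ i, Fin (n i)) ℂ)
    (Ω : Matrix (Σ i, Fin (n i)) (Σ i, Fin (n i)) ℂ)
    (R0 : K → Matrix (Σ i, Fin (n i)) (Σ i, Fin (n i)) ℂ)
    (Ω0 : Matrix (Σ i, Fin (n i)) (Σ i, Fin (n i)) ℂ) : ℝ :=
  logDet (Tk H Sig k R Ω)
    - psi (Ik H Sig k R Ω) (Ik H Sig k R0 Ω0)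
    - psi (Tk G Z k R Ω) (Tk G Z k R0 Ω0)
    + logDet (Ik G Z k R Ω)

/-!
The surrogate replaces the two log-det terms that enter the rate with a minus sign,
`log det I_k` and `log det T̄_k`, by their tangents `ψ` at the reference point, so it suffices
that the concave function `log det` lies below its tangent. Writing `Y = S²` with `S = √Y` and
`Z = S⁻¹ X S⁻¹`, one has `ψ(X, Y) - log det X = tr Z - n - log det Z = ∑ (λ - 1 - log λ) ≥ 0`
over the eigenvalues `λ > 0` of `Z`. At the reference point the tangent is exact.
-/

open scoped MatrixOrder

section LogDet

variable {p : Type*} [Fintype p] [DecidableEq p]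

lemma logDet_le_re_trace_sub_card {Z : Matrix p p ℂ} (hZ : Z.PosDef) :
    logDet Z ≤ Z.trace.re - Fintype.card p := by
  have hpos := hZ.eigenvalues_pos
  rw [logDet, hZ.isHermitian.det_eq_prod_eigenvalues, hZ.isHermitian.trace_eq_sum_eigenvalues]
  simp only [RCLike.ofReal_eq_complex_ofReal, ← Complex.ofReal_prod, ← Complex.ofReal_sum,
    Complex.ofReal_re]
  rw [Real.log_prod fun i _ => (hpos i).ne']
  calc ∑ i, Real.log (hZ.isHermitian.eigenvalues i)
      ≤ ∑ i, (hZ.isHermitian.eigenvalues i - 1) :=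
        Finset.sum_le_sum fun i _ => Real.log_le_sub_one_of_pos (hpos i)
    _ = ∑ i, hZ.isHermitian.eigenvalues i - Fintype.card p := by simp [Finset.sum_sub_distrib]

lemma logDet_eq_add_of_det_eq_mul {A B C : Matrix p p ℂ} (hA : A.PosDef) (hB : B.PosDef)
    (h : C.det = A.det * B.det) : logDet C = logDet A + logDet B := by
  obtain ⟨hA_re, hA_im⟩ := Complex.pos_iff.mp hA.det_pos
  obtain ⟨hB_re, -⟩ := Complex.pos_iff.mp hB.det_pos
  rw [logDet, h, Complex.mul_re, ← hA_im, zero_mul, sub_zero,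
    Real.log_mul hA_re.ne' hB_re.ne', logDet, logDet]

lemma logDet_le_psi {X Y : Matrix p p ℂ} (hX : X.PosDef) (hY : Y.PosDef) :
    logDet X ≤ psi X Y := by
  set S := CFC.sqrt Y
  have hSS : S * S = Y := CFC.sqrt_mul_sqrt_self Y hY.posSemidef.nonneg
  have hS : S.IsHermitian := (CFC.sqrt_nonneg Y).posSemidef.isHermitian
  have hY_det : IsUnit Y.det := hY.det_pos.ne'.isUnit
  have hS_det : IsUnit S.det := isUnit_of_mul_isUnit_left (by rwa [← det_mul, hSS])
  have hS_inv : IsUnit S⁻¹ := (isUnit_iff_isUnit_det _).mpr (isUnit_nonsing_inv_det S hS_det)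
  set Z := S⁻¹ * X * S⁻¹
  have hZ : Z.PosDef := by
    simpa [Z, hS.inv.eq] using hX.conjTranspose_mul_mul_same (mulVec_injective_of_isUnit hS_inv)
  have hXZ : X = S * Z * S := by
    simp only [Z, ← mul_assoc, mul_nonsing_inv S hS_det, one_mul]
    rw [mul_assoc, nonsing_inv_mul S hS_det, mul_one]
  have hdet : X.det = Y.det * Z.det := by
    rw [hXZ, ← hSS]; simp only [det_mul]; ring
  have htrace : (Y⁻¹ * (X - Y)).trace = Z.trace - Fintype.card p := by
    rw [mul_sub, nonsing_inv_mul Y hY_det, trace_sub, trace_one, ← hSS, Matrix.mul_inv_rev,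
      trace_mul_cycle, trace_mul_cycle]
  rw [psi, htrace, logDet_eq_add_of_det_eq_mul hY hZ hdet]
  simp only [Complex.sub_re, Complex.natCast_re]
  linarith [logDet_le_re_trace_sub_card hZ]

lemma psi_self (X : Matrix p p ℂ) : psi X X = logDet X := by
  simp [psi]

end LogDet

lemma posDef_sum_mul_mul_conjTranspose_add {q r ι : Type*} [Fintype q] [Fintype r]
    (s : Finset ι) (A : Matrix q r ℂ) {R : ι → Matrix r r ℂ} {Ω : Matrix r r ℂ}
    {N : Matrix q q ℂ} (hR : ∀ l, (R l).PosSemidef) (hΩ : Ω.PosSemidef) (hN : N.PosDef) :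
    (∑ l ∈ s, A * R l * Aᴴ + A * Ω * Aᴴ + N).PosDef :=
  PosDef.posSemidef_add ((posSemidef_sum s fun l _ => (hR l).mul_mul_conjTranspose_same A).add
    (hΩ.mul_mul_conjTranspose_same A)) hN

section SecrecyRate

variable {I : Type*} [Fintype I] [DecidableEq I] {n : I → ℕ} {K : Type*} [Fintype K]
  {m : K → ℕ} (H : ∀ k : K, Matrix (Fin (m k)) (Σ i, Fin (n i)) ℂ)
  (Sig : ∀ k : K, Matrix (Fin (m k)) (Fin (m k)) ℂ) (k : K)
  {R : K → Matrix (Σ i, Fin (n i)) (Σ i, Fin (n i)) ℂ}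
  {Ω : Matrix (Σ i, Fin (n i)) (Σ i, Fin (n i)) ℂ}

lemma Tk_posDef (hSig : (Sig k).PosDef) (hR : ∀ l, (R l).PosSemidef) (hΩ : Ω.PosSemidef) :
    (Tk H Sig k R Ω).PosDef :=
  posDef_sum_mul_mul_conjTranspose_add _ _ hR hΩ hSig

variable [DecidableEq K]

lemma Ik_posDef (hSig : (Sig k).PosDef) (hR : ∀ l, (R l).PosSemidef) (hΩ : Ω.PosSemidef) :
    (Ik H Sig k R Ω).PosDef :=
  posDef_sum_mul_mul_conjTranspose_add _ _ hR hΩ hSig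

lemma Tk_eq_add_Ik :
    Tk H Sig k R Ω = H k * R k * (H k)ᴴ + Ik H Sig k R Ω := by
  rw [Tk, Ik, ← Finset.add_sum_erase _ _ (Finset.mem_univ k)]
  abel

lemma fk_eq_logDet {e : K → ℕ} (G : ∀ k : K, Matrix (Fin (e k)) (Σ i, Fin (n i)) ℂ)
    (Z : ∀ k : K, Matrix (Fin (e k)) (Fin (e k)) ℂ) :
    fk H G Sig Z k R Ω = logDet (Tk H Sig k R Ω) - logDet (Ik H Sig k R Ω)
      - (logDet (Tk G Z k R Ω) - logDet (Ik G Z k R Ω)) := by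
  rw [Tk_eq_add_Ik, Tk_eq_add_Ik]
  rfl

end SecrecyRate

theorem surrogate_minorizes_secrecy_rate
    {I : Type*} [Fintype I] [DecidableEq I] {n : I → ℕ}
    {K : Type*} [Fintype K] [DecidableEq K] {m e : K → ℕ}
    (H : ∀ k : K, Matrix (Fin (m k)) (Σ i, Fin (n i)) ℂ)
    (G : ∀ k : K, Matrix (Fin (e k)) (Σ i, Fin (n i)) ℂ)
    (Sig : ∀ k : K, Matrix (Fin (m k)) (Fin (m k)) ℂ)
    (Z : ∀ k : K, Matrix (Fin (e k)) (Fin (e k)) ℂ)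
    (k : K) (hSig : (Sig k).PosDef) (hZ : (Z k).PosDef)
    (R0 R : K → Matrix (Σ i, Fin (n i)) (Σ i, Fin (n i)) ℂ)
    (Ω0 Ω : Matrix (Σ i, Fin (n i)) (Σ i, Fin (n i)) ℂ)
    (hR0 : ∀ l, (R0 l).PosSemidef) (hΩ0 : Ω0.PosSemidef)
    (hR : ∀ l, (R l).PosSemidef) (hΩ : Ω.PosSemidef) :
    ftilde H G Sig Z k R Ω R0 Ω0 ≤ fk H G Sig Z k R Ω ∧
    ftilde H G Sig Z k R0 Ω0 R0 Ω0 = fk H G Sig Z k R0 Ω0 := by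
  refine ⟨?_, ?_⟩
  · have hI := logDet_le_psi (Ik_posDef H Sig k hSig hR hΩ) (Ik_posDef H Sig k hSig hR0 hΩ0)
    have hT := logDet_le_psi (Tk_posDef G Z k hZ hR hΩ) (Tk_posDef G Z k hZ hR0 hΩ0)
    rw [fk_eq_logDet, ftilde]
    linarith
  · rw [fk_eq_logDet, ftilde, psi_self, psi_self]
    ring
end
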